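/- arXiv:1307.2521 — 2 statements merged into one kernel-verified Lean document; each statement's English description precedes it below -/
import Mathlib

section
/- For every positive integer n there exists a set P of n points in ℝ² whose coordinates are integers in {0, 1, …, n⁶} such that: (i) no three distinct points of P are collinear; (ii) any two distinct connecting lines of P intersect (no two of them are parallel); and (iii) every point of ℝ² not in P lies on at most two distinct connecting lines of P. -/
/-!
The set is built greedily inside the grid `{0, …, N}²`, `N = n⁶`. A new point `t` can be added to a
good set `S` of `k < n` points as long as it avoids the connecting lines of `S`, the parallels to
them through points of `S`, and the lines joining a point of `S` to a crossing point of two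
connecting lines outside `S`: the new connecting lines all pass through `t`, so they meet each
other there, they meet every old line because they are not parallel to it, and they create no
triple point because they miss the old crossings. These are at most `k² + k³ + k⁵` lines, each
containing at most `N + 1` grid points, and `k + (k² + k³ + k⁵)(N + 1) < (N + 1)²`.
-/

/-- Orientation of an ordered triple of points in the plane: the sign of the
determinant of the 3×3 matrix with rows (1, aₓ, a_y), (1, bₓ, b_y), (1, cₓ, c_y). -/
noncomputable def orient (a b c : ℝ × ℝ) : ℝ :=
  Real.sign (Matrix.det !![1, a.1, a.2; 1, b.1, b.2; 1, c.1, c.2])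

/-- A line in ℝ² is a one-dimensional affine subspace of ℝ². -/
def IsLine (l : AffineSubspace ℝ (ℝ × ℝ)) : Prop :=
  Module.finrank ℝ l.direction = 1

/-- `P` can be covered by at most `k` lines. -/
def CoverableBy (P : Set (ℝ × ℝ)) (k : ℕ) : Prop :=
  ∃ L : Set (AffineSubspace ℝ (ℝ × ℝ)), L.Finite ∧ L.ncard ≤ k ∧
    (∀ l ∈ L, IsLine l) ∧ ∀ p ∈ P, ∃ l ∈ L, p ∈ l

/-- A connecting line of a point set `X`: a line passing through at least two
distinct points of `X`. -/
def IsConnectingLine (X : Set (ℝ × ℝ)) (l : AffineSubspace ℝ (ℝ × ℝ)) : Prop :=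
  IsLine l ∧ ∃ p ∈ X, ∃ q ∈ X, p ≠ q ∧ p ∈ l ∧ q ∈ l

open Module Finset

namespace AffineSubspace

variable {k V P : Type*} [Field k] [AddCommGroup V] [Module k V] [AddTorsor V P]

theorem finrank_direction_affineSpan_pair {p q : P} (hpq : p ≠ q) :
    finrank k (line[k, p, q]).direction = 1 := by
  rw [direction_affineSpan, vectorSpan_pair]
  exact finrank_span_singleton (vsub_ne_zero.2 hpq)

theorem eq_affineSpan_pair_of_finrank_direction_eq_one {l : AffineSubspace k P}
    (hl : finrank k l.direction = 1) {p q : P} (hp : p ∈ l) (hq : q ∈ l) (hpq : p ≠ q) :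
    l = line[k, p, q] := by
  have hle := affineSpan_pair_le_of_mem_of_mem hp hq
  have : FiniteDimensional k l.direction := .of_finrank_eq_succ hl
  refine (eq_of_direction_eq_of_nonempty_of_le ?_ ⟨p, left_mem_affineSpan_pair k p q⟩ hle).symm
  exact Submodule.eq_of_le_of_finrank_eq (direction_le hle)
    (by rw [hl, finrank_direction_affineSpan_pair hpq])

theorem eq_of_finrank_direction_eq_one_of_mem {l₁ l₂ : AffineSubspace k P}
    (h₁ : finrank k l₁.direction = 1) (h₂ : finrank k l₂.direction = 1) {p q : P}
    (hp₁ : p ∈ l₁) (hq₁ : q ∈ l₁) (hp₂ : p ∈ l₂) (hq₂ : q ∈ l₂) (hpq : p ≠ q) : l₁ = l₂ :=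
  (eq_affineSpan_pair_of_finrank_direction_eq_one h₁ hp₁ hq₁ hpq).trans
    (eq_affineSpan_pair_of_finrank_direction_eq_one h₂ hp₂ hq₂ hpq).symm

theorem nonempty_of_finrank_direction_eq_one {l : AffineSubspace k P}
    (hl : finrank k l.direction = 1) : (l : Set P).Nonempty := by
  rw [nonempty_iff_ne_bot]
  rintro rfl
  rw [direction_bot, finrank_bot] at hl
  exact zero_ne_one hl

theorem inter_nonempty_of_direction_ne [FiniteDimensional k V] (hV : finrank k V = 2)
    {l₁ l₂ : AffineSubspace k P} (h₁ : finrank k l₁.direction = 1)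
    (h₂ : finrank k l₂.direction = 1) (hd : l₁.direction ≠ l₂.direction) :
    ((l₁ : Set P) ∩ l₂).Nonempty := by
  have hlt : l₁.direction < l₁.direction ⊔ l₂.direction := by
    refine lt_of_le_of_ne le_sup_left fun h => hd ?_
    exact (Submodule.eq_of_le_of_finrank_eq (h ▸ le_sup_right) (h₂.trans h₁.symm)).symm
  have := Submodule.finrank_lt_finrank_of_lt hlt
  refine inter_nonempty_of_nonempty_of_sup_direction_eq_top
    (nonempty_of_finrank_direction_eq_one h₁) (nonempty_of_finrank_direction_eq_one h₂) ?_
  exact Submodule.eq_top_of_finrank_eq (le_antisymm (Submodule.finrank_le _) (by omega))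

theorem injOn_fst_or_injOn_snd {l : AffineSubspace k (k × k)} (hl : finrank k l.direction = 1) :
    Set.InjOn Prod.fst (l : Set (k × k)) ∨ Set.InjOn Prod.snd (l : Set (k × k)) := by
  by_contra! h
  simp only [Set.InjOn, not_forall] at h
  obtain ⟨⟨p, hp, q, hq, hfst, hpq⟩, u, hu, v, hv, hsnd, huv⟩ := h
  obtain ⟨c, hc⟩ := exists_smul_eq_of_finrank_eq_one hl
    (x := ⟨p -ᵥ q, vsub_mem_direction hp hq⟩) (by simpa [sub_eq_zero] using hpq)
    ⟨u -ᵥ v, vsub_mem_direction hu hv⟩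
  have hc := congrArg Subtype.val hc
  simp only [SetLike.val_smul, vsub_eq_sub, Prod.ext_iff, Prod.smul_fst, Prod.smul_snd,
    Prod.fst_sub, Prod.snd_sub, smul_eq_mul, hfst, hsnd, sub_self, mul_zero] at hc
  exact huv (Prod.ext (sub_eq_zero.1 hc.1.symm) hsnd)

end AffineSubspace

open AffineSubspace

theorem isLine_affineSpan_pair {p q : ℝ × ℝ} (hpq : p ≠ q) : IsLine line[ℝ, p, q] :=
  finrank_direction_affineSpan_pair hpq

theorem IsConnectingLine.of_insert {P : Set (ℝ × ℝ)} {t : ℝ × ℝ} {l : AffineSubspace ℝ (ℝ × ℝ)}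
    (h : IsConnectingLine (insert t P) l) :
    IsConnectingLine P l ∨ ∃ a ∈ P, a ≠ t ∧ l = line[ℝ, t, a] := by
  obtain ⟨hl, p, hp, q, hq, hpq, hpl, hql⟩ := h
  rcases hp with rfl | hp <;> rcases hq with rfl | hq
  · exact absurd rfl hpq
  · exact .inr ⟨q, hq, hpq.symm, eq_affineSpan_pair_of_finrank_direction_eq_one hl hpl hql hpq⟩
  · exact .inr ⟨p, hp, hpq, eq_affineSpan_pair_of_finrank_direction_eq_one hl hql hpl hpq.symm⟩
  · exact .inl ⟨hl, p, hp, q, hq, hpq, hpl, hql⟩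

namespace SpecialPointSet

def NoThreeCollinear (P : Set (ℝ × ℝ)) : Prop :=
  ∀ p ∈ P, ∀ q ∈ P, ∀ r ∈ P, p ≠ q → p ≠ r → q ≠ r → ¬ Collinear ℝ ({p, q, r} : Set (ℝ × ℝ))

def ConnectingLinesMeet (P : Set (ℝ × ℝ)) : Prop :=
  ∀ l₁ l₂ : AffineSubspace ℝ (ℝ × ℝ), IsConnectingLine P l₁ → IsConnectingLine P l₂ → l₁ ≠ l₂ →
    ∃ x : ℝ × ℝ, x ∈ l₁ ∧ x ∈ l₂

def NoTriplePointOutside (P : Set (ℝ × ℝ)) : Prop :=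
  ∀ x : ℝ × ℝ, x ∉ P → ∀ l₁ l₂ l₃ : AffineSubspace ℝ (ℝ × ℝ),
    IsConnectingLine P l₁ → IsConnectingLine P l₂ → IsConnectingLine P l₃ →
    l₁ ≠ l₂ → l₁ ≠ l₃ → l₂ ≠ l₃ → x ∈ l₁ → x ∈ l₂ → x ∈ l₃ → False

variable {P : Set (ℝ × ℝ)} {t : ℝ × ℝ}

theorem NoThreeCollinear.insert (hP : NoThreeCollinear P)
    (ht : ∀ a ∈ P, ∀ b ∈ P, a ≠ b → t ∉ line[ℝ, a, b]) : NoThreeCollinear (insert t P) := by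
  intro p hp q hq r hr hpq hpr hqr hcol
  rcases hp with rfl | hp <;> rcases hq with rfl | hq <;> rcases hr with rfl | hr
  · exact hpq rfl
  · exact hpq rfl
  · exact hpr rfl
  · exact ht q hq r hr hqr (hcol.mem_affineSpan_of_mem_of_ne (by simp) (by simp) (by simp) hqr)
  · exact hqr rfl
  · exact ht p hp r hr hpr (hcol.mem_affineSpan_of_mem_of_ne (by simp) (by simp) (by simp) hpr)
  · exact ht p hp q hq hpq (hcol.mem_affineSpan_of_mem_of_ne (by simp) (by simp) (by simp) hpq)
  · exact hP p hp q hq r hr hpq hpr hqr hcol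

theorem ConnectingLinesMeet.insert (hP : ConnectingLinesMeet P)
    (ht : ∀ a ∈ P, ∀ l, IsConnectingLine P l → t ∉ mk' a l.direction) :
    ConnectingLinesMeet (insert t P) := by
  have new_old {a} (ha : a ∈ P) (hat : a ≠ t) {l} (hl : IsConnectingLine P l) :
      ∃ x, x ∈ line[ℝ, t, a] ∧ x ∈ l := by
    by_contra h
    have hd : line[ℝ, t, a].direction = l.direction := by
      by_contra hd
      exact h (inter_nonempty_of_direction_ne (by simp)
        (isLine_affineSpan_pair hat.symm) hl.1 hd)
    refine ht a ha l hl ?_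
    rw [mem_mk', ← hd]
    exact vsub_mem_direction (left_mem_affineSpan_pair ℝ t a) (right_mem_affineSpan_pair ℝ t a)
  intro l₁ l₂ h₁ h₂ hne
  rcases h₁.of_insert with h₁ | ⟨a, ha, hat, rfl⟩ <;>
    rcases h₂.of_insert with h₂ | ⟨b, hb, hbt, rfl⟩
  · exact hP l₁ l₂ h₁ h₂ hne
  · exact (new_old hb hbt h₁).imp fun _ => And.symm
  · exact new_old ha hat h₂
  · exact ⟨t, left_mem_affineSpan_pair ℝ t a, left_mem_affineSpan_pair ℝ t b⟩

theorem NoTriplePointOutside.insert (hP : NoTriplePointOutside P)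
    (ht : ∀ a ∈ P, ∀ l₁ l₂, IsConnectingLine P l₁ → IsConnectingLine P l₂ → l₁ ≠ l₂ →
      ∀ x ∈ l₁, x ∈ l₂ → x ∉ P → t ∉ line[ℝ, a, x]) :
    NoTriplePointOutside (insert t P) := by
  intro x hx l₁ l₂ l₃ h₁ h₂ h₃ h₁₂ h₁₃ h₂₃ hx₁ hx₂ hx₃
  have hxt : x ≠ t := fun h => hx (.inl h)
  have hxP : x ∉ P := fun h => hx (.inr h)
  have new_new {a b} (hat : a ≠ t) (hbt : b ≠ t) (hne : line[ℝ, t, a] ≠ line[ℝ, t, b])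
      (hxa : x ∈ line[ℝ, t, a]) (hxb : x ∈ line[ℝ, t, b]) : False :=
    hne (eq_of_finrank_direction_eq_one_of_mem (isLine_affineSpan_pair hat.symm)
      (isLine_affineSpan_pair hbt.symm) (left_mem_affineSpan_pair ℝ t a) hxa
      (left_mem_affineSpan_pair ℝ t b) hxb hxt.symm)
  have new_old_old {a} (ha : a ∈ P) (hat : a ≠ t) {l l'} (hl : IsConnectingLine P l)
      (hl' : IsConnectingLine P l') (hne : l ≠ l') (hxa : x ∈ line[ℝ, t, a]) (hxl : x ∈ l)
      (hxl' : x ∈ l') : False := by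
    refine ht a ha l l' hl hl' hne x hxl hxl' hxP ?_
    have hax : a ≠ x := fun h => hxP (h ▸ ha)
    -- `line[t, a]` passes through `a` and `x`, so it is the forbidden `line[a, x]`
    rw [← eq_affineSpan_pair_of_finrank_direction_eq_one (isLine_affineSpan_pair hat.symm)
      (right_mem_affineSpan_pair ℝ t a) hxa hax]
    exact left_mem_affineSpan_pair ℝ t a
  rcases h₁.of_insert with h₁ | ⟨a, ha, hat, rfl⟩ <;>
    rcases h₂.of_insert with h₂ | ⟨b, hb, hbt, rfl⟩ <;>
    rcases h₃.of_insert with h₃ | ⟨c, hc, hct, rfl⟩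
  · exact hP x hxP l₁ l₂ l₃ h₁ h₂ h₃ h₁₂ h₁₃ h₂₃ hx₁ hx₂ hx₃
  · exact new_old_old hc hct h₁ h₂ h₁₂ hx₃ hx₁ hx₂
  · exact new_old_old hb hbt h₁ h₃ h₁₃ hx₂ hx₁ hx₃
  · exact new_new hbt hct h₂₃ hx₂ hx₃
  · exact new_old_old ha hat h₂ h₃ h₂₃ hx₁ hx₂ hx₃
  · exact new_new hat hct h₁₃ hx₁ hx₃
  · exact new_new hat hbt h₁₂ hx₁ hx₂
  · exact new_new hat hbt h₁₂ hx₁ hx₂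

def grid (N : ℕ) : Finset (ℝ × ℝ) :=
  (range (N + 1) ×ˢ range (N + 1)).map (Nat.castEmbedding.prodMap Nat.castEmbedding)

theorem mem_grid {N : ℕ} {x : ℝ × ℝ} :
    x ∈ grid N ↔ ∃ a b : ℕ, a ≤ N ∧ b ≤ N ∧ x = ((a : ℝ), (b : ℝ)) := by
  simp [grid, eq_comm, and_assoc]

theorem card_grid (N : ℕ) : #(grid N) = (N + 1) ^ 2 := by
  simp [grid, sq]

theorem card_grid_filter_mem_le {N : ℕ} {l : AffineSubspace ℝ (ℝ × ℝ)} (hl : IsLine l)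
    [DecidablePred (· ∈ l)] : #{x ∈ grid N | x ∈ l} ≤ N + 1 := by
  have coord_le {f : ℝ × ℝ → ℝ} (hf : Set.InjOn f l)
      (hgrid : ∀ x ∈ grid N, ∃ a ≤ N, f x = a) : #{x ∈ grid N | x ∈ l} ≤ N + 1 := by
    calc #{x ∈ grid N | x ∈ l} ≤ #((range (N + 1)).map Nat.castEmbedding) := by
          refine card_le_card_of_injOn f (fun x hx => ?_) (hf.mono fun x hx => (mem_filter.1 hx).2)
          obtain ⟨a, ha, hfa⟩ := hgrid x (mem_filter.1 hx).1
          exact mem_coe.2 (mem_map.2 ⟨a, mem_range.2 (Nat.lt_succ_iff.2 ha), hfa.symm⟩)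
      _ = N + 1 := by simp
  rcases injOn_fst_or_injOn_snd hl with hf | hf <;> refine coord_le hf fun x hx => ?_
  all_goals obtain ⟨a, b, ha, hb, rfl⟩ := mem_grid.1 hx
  · exact ⟨a, ha, rfl⟩
  · exact ⟨b, hb, rfl⟩

theorem exists_mem_grid_forall_notMem (N : ℕ) (S : Finset (ℝ × ℝ))
    (L : Finset (AffineSubspace ℝ (ℝ × ℝ))) (hL : ∀ l ∈ L, IsLine l)
    (hcard : #S + #L * (N + 1) < (N + 1) ^ 2) :
    ∃ t ∈ grid N, t ∉ S ∧ ∀ l ∈ L, t ∉ l := by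
  classical
  have hcovered : #(S ∪ L.biUnion fun l => {x ∈ grid N | x ∈ l}) < #(grid N) := by
    calc #(S ∪ L.biUnion fun l => {x ∈ grid N | x ∈ l})
        ≤ #S + ∑ l ∈ L, #{x ∈ grid N | x ∈ l} :=
          (card_union_le _ _).trans (by gcongr; exact card_biUnion_le)
      _ ≤ #S + ∑ _l ∈ L, (N + 1) := by gcongr with l hl; exact card_grid_filter_mem_le (hL l hl)
      _ < #(grid N) := by rwa [sum_const, smul_eq_mul, card_grid]
  obtain ⟨t, htg, ht⟩ := exists_mem_notMem_of_card_lt_card hcovered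
  simp only [mem_union, mem_biUnion, mem_filter, not_or, not_exists, not_and] at ht
  exact ⟨t, htg, ht.1, fun l hl htl => ht.2 l hl htg htl⟩

open scoped Classical in
noncomputable def joinLines (A B : Finset (ℝ × ℝ)) : Finset (AffineSubspace ℝ (ℝ × ℝ)) :=
  {p ∈ A ×ˢ B | p.1 ≠ p.2}.image fun p => line[ℝ, p.1, p.2]

/-- Some common point of `l₁` and `l₂`: the only one if they are distinct lines that meet. -/
noncomputable def meet (l₁ l₂ : AffineSubspace ℝ (ℝ × ℝ)) : ℝ × ℝ :=
  Classical.epsilon fun x => x ∈ l₁ ∧ x ∈ l₂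

open scoped Classical in
noncomputable def meetPoints (L : Finset (AffineSubspace ℝ (ℝ × ℝ))) : Finset (ℝ × ℝ) :=
  (L ×ˢ L).image fun p => meet p.1 p.2

open scoped Classical in
noncomputable def forbiddenLines (S : Finset (ℝ × ℝ)) : Finset (AffineSubspace ℝ (ℝ × ℝ)) :=
  joinLines S S ∪ (S ×ˢ joinLines S S).image (fun p => mk' p.1 p.2.direction) ∪
    joinLines S (meetPoints (joinLines S S))

theorem affineSpan_pair_mem_joinLines {A B : Finset (ℝ × ℝ)} {a b : ℝ × ℝ} (ha : a ∈ A)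
    (hb : b ∈ B) (hab : a ≠ b) : line[ℝ, a, b] ∈ joinLines A B := by
  classical
  exact mem_image.2 ⟨(a, b), mem_filter.2 ⟨mem_product.2 ⟨ha, hb⟩, hab⟩, rfl⟩

theorem isLine_of_mem_joinLines {A B : Finset (ℝ × ℝ)} {l : AffineSubspace ℝ (ℝ × ℝ)}
    (hl : l ∈ joinLines A B) : IsLine l := by
  classical
  obtain ⟨p, hp, rfl⟩ := mem_image.1 hl
  exact isLine_affineSpan_pair (mem_filter.1 hp).2

theorem card_joinLines_le (A B : Finset (ℝ × ℝ)) : #(joinLines A B) ≤ #A * #B := by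
  classical
  exact card_image_le.trans ((card_filter_le _ _).trans (card_product A B).le)

theorem mem_joinLines_of_isConnectingLine {S : Finset (ℝ × ℝ)} {l : AffineSubspace ℝ (ℝ × ℝ)}
    (hl : IsConnectingLine S l) : l ∈ joinLines S S := by
  obtain ⟨hl, p, hp, q, hq, hpq, hpl, hql⟩ := hl
  rw [eq_affineSpan_pair_of_finrank_direction_eq_one hl hpl hql hpq]
  exact affineSpan_pair_mem_joinLines hp hq hpq

theorem mem_meetPoints {L : Finset (AffineSubspace ℝ (ℝ × ℝ))} {l₁ l₂ : AffineSubspace ℝ (ℝ × ℝ)}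
    (h₁ : l₁ ∈ L) (h₂ : l₂ ∈ L) (hl₁ : IsLine l₁) (hl₂ : IsLine l₂) (hne : l₁ ≠ l₂) {x : ℝ × ℝ}
    (hx₁ : x ∈ l₁) (hx₂ : x ∈ l₂) : x ∈ meetPoints L := by
  classical
  obtain ⟨hm₁, hm₂⟩ : meet l₁ l₂ ∈ l₁ ∧ meet l₁ l₂ ∈ l₂ :=
    Classical.epsilon_spec (p := fun y => y ∈ l₁ ∧ y ∈ l₂) ⟨x, hx₁, hx₂⟩
  have hxm : x = meet l₁ l₂ := by
    by_contra hxm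
    exact hne (eq_of_finrank_direction_eq_one_of_mem hl₁ hl₂ hx₁ hm₁ hx₂ hm₂ hxm)
  exact mem_image.2 ⟨(l₁, l₂), mem_product.2 ⟨h₁, h₂⟩, hxm.symm⟩

theorem card_meetPoints_le (L : Finset (AffineSubspace ℝ (ℝ × ℝ))) : #(meetPoints L) ≤ #L ^ 2 := by
  classical
  exact card_image_le.trans ((card_product L L).trans (sq _).symm).le

variable {S : Finset (ℝ × ℝ)} {a : ℝ × ℝ}

theorem affineSpan_pair_mem_forbiddenLines {b : ℝ × ℝ} (ha : a ∈ S) (hb : b ∈ S) (hab : a ≠ b) :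
    line[ℝ, a, b] ∈ forbiddenLines S := by
  classical
  exact mem_union_left _ (mem_union_left _ (affineSpan_pair_mem_joinLines ha hb hab))

theorem mk'_direction_mem_forbiddenLines {l : AffineSubspace ℝ (ℝ × ℝ)} (ha : a ∈ S)
    (hl : IsConnectingLine S l) : mk' a l.direction ∈ forbiddenLines S := by
  classical
  exact mem_union_left _ (mem_union_right _
    (mem_image.2 ⟨(a, l), mem_product.2 ⟨ha, mem_joinLines_of_isConnectingLine hl⟩, rfl⟩))

theorem affineSpan_meet_mem_forbiddenLines {l₁ l₂ : AffineSubspace ℝ (ℝ × ℝ)} {x : ℝ × ℝ}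
    (ha : a ∈ S) (h₁ : IsConnectingLine S l₁) (h₂ : IsConnectingLine S l₂) (hne : l₁ ≠ l₂)
    (hx₁ : x ∈ l₁) (hx₂ : x ∈ l₂) (hxS : x ∉ S) : line[ℝ, a, x] ∈ forbiddenLines S := by
  classical
  refine mem_union_right _ (affineSpan_pair_mem_joinLines ha ?_ fun h => hxS (h ▸ ha))
  exact mem_meetPoints (mem_joinLines_of_isConnectingLine h₁)
    (mem_joinLines_of_isConnectingLine h₂) h₁.1 h₂.1 hne hx₁ hx₂

theorem isLine_of_mem_forbiddenLines {l : AffineSubspace ℝ (ℝ × ℝ)} (hl : l ∈ forbiddenLines S) :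
    IsLine l := by
  classical
  simp only [forbiddenLines, mem_union, mem_image] at hl
  obtain (hl | ⟨⟨b, l'⟩, hl', rfl⟩) | hl := hl
  · exact isLine_of_mem_joinLines hl
  · rw [IsLine, direction_mk']
    exact isLine_of_mem_joinLines (mem_product.1 hl').2
  · exact isLine_of_mem_joinLines hl

theorem card_forbiddenLines_le (S : Finset (ℝ × ℝ)) :
    #(forbiddenLines S) ≤ #S ^ 2 + #S ^ 3 + #S ^ 5 := by
  classical
  have hjoin := card_joinLines_le S S
  calc #(forbiddenLines S)
      ≤ #(joinLines S S) + #S * #(joinLines S S) + #S * #(meetPoints (joinLines S S)) := by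
        refine (card_union_le _ _).trans (add_le_add ((card_union_le _ _).trans
          (add_le_add le_rfl (card_image_le.trans (card_product _ _).le))) (card_joinLines_le _ _))
    _ ≤ #S ^ 2 + #S * #S ^ 2 + #S * (#S ^ 2) ^ 2 := by
        rw [← sq] at hjoin
        gcongr
        exact (card_meetPoints_le _).trans (by gcongr)
    _ = #S ^ 2 + #S ^ 3 + #S ^ 5 := by ring

theorem card_add_card_forbiddenLines_mul_lt {n : ℕ} (hS : #S < n) :
    #S + #(forbiddenLines S) * (n ^ 6 + 1) < (n ^ 6 + 1) ^ 2 := by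
  set k := #S
  have hforbidden : #(forbiddenLines S) < n ^ 6 := by
    calc #(forbiddenLines S) ≤ k ^ 2 + k ^ 3 + k ^ 5 := card_forbiddenLines_le S
      _ < (k + 1) ^ 6 := by ring_nf; omega
      _ ≤ n ^ 6 := Nat.pow_le_pow_left hS 6
  have hk : k < n ^ 6 + 1 := by nlinarith [Nat.le_self_pow (n := 6) (by norm_num) n]
  nlinarith

theorem exists_special_subset_grid (n : ℕ) :
    ∀ k ≤ n, ∃ S : Finset (ℝ × ℝ), S ⊆ grid (n ^ 6) ∧ #S = k ∧
      NoThreeCollinear S ∧ ConnectingLinesMeet S ∧ NoTriplePointOutside S := by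
  intro k
  induction k with
  | zero =>
    exact fun _ => ⟨∅, empty_subset _, rfl, by simp [NoThreeCollinear],
      by simp [ConnectingLinesMeet, IsConnectingLine],
      by simp [NoTriplePointOutside, IsConnectingLine]⟩
  | succ k ih =>
    intro hk
    obtain ⟨S, hSg, rfl, h₁, h₂, h₃⟩ := ih (by omega)
    obtain ⟨t, htg, htS, ht⟩ := exists_mem_grid_forall_notMem (n ^ 6) S (forbiddenLines S)
      (fun _ => isLine_of_mem_forbiddenLines) (card_add_card_forbiddenLines_mul_lt hk)
    refine ⟨insert t S, insert_subset htg hSg, card_insert_of_notMem htS, ?_, ?_, ?_⟩ <;>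
      rw [coe_insert]
    · exact h₁.insert fun a ha b hb hab =>
        ht _ (affineSpan_pair_mem_forbiddenLines ha hb hab)
    · exact h₂.insert fun a ha l hl => ht _ (mk'_direction_mem_forbiddenLines ha hl)
    · exact h₃.insert fun a ha l₁ l₂ hl₁ hl₂ hne x hx₁ hx₂ hxS =>
        ht _ (affineSpan_meet_mem_forbiddenLines ha hl₁ hl₂ hne hx₁ hx₂ hxS)

end SpecialPointSet

theorem special_point_set_exists_general (n : ℕ) :
    ∃ P : Set (ℝ × ℝ), P.Finite ∧ P.ncard = n ∧
      (∀ p ∈ P, ∃ a b : ℕ, a ≤ n ^ 6 ∧ b ≤ n ^ 6 ∧ p = ((a : ℝ), (b : ℝ))) ∧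
      (∀ p ∈ P, ∀ q ∈ P, ∀ r ∈ P, p ≠ q → p ≠ r → q ≠ r →
        ¬ Collinear ℝ ({p, q, r} : Set (ℝ × ℝ))) ∧
      (∀ l₁ l₂ : AffineSubspace ℝ (ℝ × ℝ), IsConnectingLine P l₁ →
        IsConnectingLine P l₂ → l₁ ≠ l₂ → ∃ x : ℝ × ℝ, x ∈ l₁ ∧ x ∈ l₂) ∧
      (∀ x : ℝ × ℝ, x ∉ P → ∀ l₁ l₂ l₃ : AffineSubspace ℝ (ℝ × ℝ),
        IsConnectingLine P l₁ → IsConnectingLine P l₂ → IsConnectingLine P l₃ →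
        l₁ ≠ l₂ → l₁ ≠ l₃ → l₂ ≠ l₃ →
        x ∈ l₁ → x ∈ l₂ → x ∈ l₃ → False) := by
  obtain ⟨S, hSg, hcard, h₁, h₂, h₃⟩ := SpecialPointSet.exists_special_subset_grid n n le_rfl
  exact ⟨S, S.finite_toSet, by rw [Set.ncard_coe_finset, hcard],
    fun p hp => SpecialPointSet.mem_grid.1 (hSg hp), h₁, h₂, h₃⟩

/-- For every positive integer `n` there is a set of `n` points with integer
coordinates in `{0, …, n⁶}` that is in general position, with no two of its
connecting lines parallel, and no point outside the set on three of its
connecting lines. -/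
theorem special_point_set_exists (n : ℕ) (hn : 0 < n) :
    ∃ P : Set (ℝ × ℝ), P.Finite ∧ P.ncard = n ∧
      (∀ p ∈ P, ∃ a b : ℕ, a ≤ n ^ 6 ∧ b ≤ n ^ 6 ∧ p = ((a : ℝ), (b : ℝ))) ∧
      (∀ p ∈ P, ∀ q ∈ P, ∀ r ∈ P, p ≠ q → p ≠ r → q ≠ r →
        ¬ Collinear ℝ ({p, q, r} : Set (ℝ × ℝ))) ∧
      (∀ l₁ l₂ : AffineSubspace ℝ (ℝ × ℝ), IsConnectingLine P l₁ →
        IsConnectingLine P l₂ → l₁ ≠ l₂ → ∃ x : ℝ × ℝ, x ∈ l₁ ∧ x ∈ l₂) ∧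
      (∀ x : ℝ × ℝ, x ∉ P → ∀ l₁ l₂ l₃ : AffineSubspace ℝ (ℝ × ℝ),
        IsConnectingLine P l₁ → IsConnectingLine P l₂ → IsConnectingLine P l₃ →
        l₁ ≠ l₂ → l₁ ≠ l₃ → l₂ ≠ l₃ →
        x ∈ l₁ → x ∈ l₂ → x ∈ l₃ → False) :=
  special_point_set_exists_general n
end

section
/- Let s₁¹, s₁², s₂¹, s₂², s₃¹, s₃² be six pairwise distinct points in ℝ² no three of which are collinear, and for a ∈ {1, 2, 3} let sₐ denote the closed segment with endpoints sₐ¹ and sₐ². If some line in ℝ² intersects all three segments s₁, s₂, s₃, then the eight orientations orientation(s₁ᵘ, s₂ᵛ, s₃ʷ), for u, v, w ∈ {1, 2}, are not all equal. -/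
/-!
The orientation determinant `D(x, y, z)` is affine in each argument. If the eight orientations
of endpoint triples all had the same value `ε`, which is `±1` by general position, then `ε D`
would be positive at the eight vertices of the product of the three segments, hence, one
argument at a time, on the whole product. But a line meeting the three segments gives points
`x, y, z` of the product that are collinear, so `D(x, y, z) = 0`.
-/

def orientDet (a b c : ℝ × ℝ) : ℝ :=
  (b.1 - a.1) * (c.2 - a.2) - (b.2 - a.2) * (c.1 - a.1)

lemma orient_eq_sign_orientDet (a b c : ℝ × ℝ) :
    orient a b c = Real.sign (orientDet a b c) := by
  unfold orient orientDet
  congr 1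
  rw [Matrix.det_fin_three]
  simp only [Matrix.of_apply, Matrix.cons_val', Matrix.cons_val_zero, Matrix.cons_val_one,
    Matrix.cons_val_two, Matrix.empty_val', Matrix.cons_val_fin_one, Matrix.head_cons,
    Matrix.tail_cons, Matrix.head_fin_const]
  ring

lemma orientDet_rotate (a b c : ℝ × ℝ) : orientDet a b c = orientDet b c a := by
  unfold orientDet
  ring

lemma orientDet_smul_add_smul_left {u v : ℝ} (huv : u + v = 1) (p q b c : ℝ × ℝ) :
    orientDet (u • p + v • q) b c = u * orientDet p b c + v * orientDet q b c := by
  obtain rfl : v = 1 - u := by linarith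
  simp only [orientDet, Prod.fst_add, Prod.snd_add, Prod.smul_fst, Prod.smul_snd, smul_eq_mul]
  ring

lemma orientDet_eq_zero_iff_collinear (a b c : ℝ × ℝ) :
    orientDet a b c = 0 ↔ Collinear ℝ ({a, b, c} : Set (ℝ × ℝ)) := by
  constructor
  · intro h
    rcases eq_or_ne b a with rfl | hba
    · simpa using collinear_pair ℝ b c
    rw [collinear_iff_of_mem (Set.mem_insert a _)]
    have hnorm : (b.1 - a.1) ^ 2 + (b.2 - a.2) ^ 2 ≠ 0 := by
      contrapose! hba
      ext <;> nlinarith [sq_nonneg (b.1 - a.1), sq_nonneg (b.2 - a.2)]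
    -- `c - a` is the projection of itself onto `b - a`, as it has no orthogonal component
    set t := ((c.1 - a.1) * (b.1 - a.1) + (c.2 - a.2) * (b.2 - a.2)) /
      ((b.1 - a.1) ^ 2 + (b.2 - a.2) ^ 2)
    refine ⟨b - a, ?_⟩
    simp only [Set.mem_insert_iff, Set.mem_singleton_iff, forall_eq_or_imp, forall_eq]
    refine ⟨⟨0, by simp⟩, ⟨1, by simp⟩, ⟨t, ?_⟩⟩
    unfold orientDet at h
    ext <;> simp only [t, vadd_eq_add, Prod.fst_add, Prod.snd_add, Prod.smul_fst, Prod.smul_snd,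
      Prod.fst_sub, Prod.snd_sub, smul_eq_mul] <;> field_simp
    · linear_combination -(b.2 - a.2) * h
    · linear_combination (b.1 - a.1) * h
  · rw [collinear_iff_of_mem (Set.mem_insert a _)]
    rintro ⟨v, hv⟩
    obtain ⟨rb, rfl⟩ := hv b (by simp)
    obtain ⟨rc, rfl⟩ := hv c (by simp)
    simp only [orientDet, vadd_eq_add, Prod.fst_add, Prod.snd_add, Prod.smul_fst, Prod.smul_snd,
      smul_eq_mul]
    ring

lemma IsLine.collinear {l : AffineSubspace ℝ (ℝ × ℝ)} (hl : IsLine l) :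
    Collinear ℝ (l : Set (ℝ × ℝ)) := by
  rw [collinear_iff_rank_le_one, ← AffineSubspace.direction, ← Module.finrank_eq_rank, hl]
  simp

lemma pos_mul_orientDet_of_mem_segment {ε : ℝ} {p q x b c : ℝ × ℝ}
    (hp : 0 < ε * orientDet p b c) (hq : 0 < ε * orientDet q b c) (hx : x ∈ segment ℝ p q) :
    0 < ε * orientDet x b c := by
  obtain ⟨u, v, hu, hv, huv, rfl⟩ := hx
  have := convex_Ioi (0 : ℝ) hp hq hu hv huv
  simp only [smul_eq_mul, Set.mem_Ioi] at this
  rw [orientDet_smul_add_smul_left huv]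
  linarith

lemma pos_mul_orientDet_of_mem_segments {ε : ℝ} {P Q R : Fin 2 → ℝ × ℝ} {x y z : ℝ × ℝ}
    (hvert : ∀ u v w, 0 < ε * orientDet (P u) (Q v) (R w)) (hx : x ∈ segment ℝ (P 0) (P 1))
    (hy : y ∈ segment ℝ (Q 0) (Q 1)) (hz : z ∈ segment ℝ (R 0) (R 1)) :
    0 < ε * orientDet x y z := by
  have hxQR (v w) : 0 < ε * orientDet x (Q v) (R w) :=
    pos_mul_orientDet_of_mem_segment (hvert 0 v w) (hvert 1 v w) hx
  have hxyR (w) : 0 < ε * orientDet y (R w) x := by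
    refine pos_mul_orientDet_of_mem_segment ?_ ?_ hy <;> rw [← orientDet_rotate] <;> apply hxQR
  rw [orientDet_rotate, orientDet_rotate]
  refine pos_mul_orientDet_of_mem_segment ?_ ?_ hz <;> rw [← orientDet_rotate] <;> apply hxyR

theorem segments_stabbed_orientations_not_all_equal_general (s : Fin 3 × Fin 2 → ℝ × ℝ)
    (hgen : ∀ a b c : Fin 3 × Fin 2, a ≠ b → a ≠ c → b ≠ c →
      ¬ Collinear ℝ ({s a, s b, s c} : Set (ℝ × ℝ)))
    (hline : ∃ l : AffineSubspace ℝ (ℝ × ℝ), IsLine l ∧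
      ∀ a : Fin 3, ∃ x ∈ segment ℝ (s (a, 0)) (s (a, 1)), x ∈ l) :
    ¬ ∀ u v w u' v' w' : Fin 2,
        orient (s (0, u)) (s (1, v)) (s (2, w)) =
          orient (s (0, u')) (s (1, v')) (s (2, w')) := by
  intro hall
  obtain ⟨l, hl, hmeet⟩ := hline
  choose x hxs hxl using hmeet
  have hvert (u v w : Fin 2) :
      0 < orient (s (0, 0)) (s (1, 0)) (s (2, 0)) *
        orientDet (s (0, u)) (s (1, v)) (s (2, w)) := by
    rw [hall 0 0 0 u v w, orient_eq_sign_orientDet]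
    refine Real.sign_mul_pos_of_ne_zero _ fun h => hgen _ _ _ ?_ ?_ ?_
      ((orientDet_eq_zero_iff_collinear _ _ _).mp h) <;> simp
  have hcol : orientDet (x 0) (x 1) (x 2) = 0 :=
    (orientDet_eq_zero_iff_collinear _ _ _).mpr <| hl.collinear.subset <| by
      simp [Set.insert_subset_iff, hxl]
  simpa [hcol] using pos_mul_orientDet_of_mem_segments hvert (hxs 0) (hxs 1) (hxs 2)

/-- If six points (three pairs of segment endpoints) are pairwise distinct with no
three collinear, and some line meets all three segments, then the eight
orientations of endpoint triples are not all equal. -/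
theorem segments_stabbed_orientations_not_all_equal (s : Fin 3 × Fin 2 → ℝ × ℝ)
    (hinj : Function.Injective s)
    (hgen : ∀ a b c : Fin 3 × Fin 2, a ≠ b → a ≠ c → b ≠ c →
      ¬ Collinear ℝ ({s a, s b, s c} : Set (ℝ × ℝ)))
    (hline : ∃ l : AffineSubspace ℝ (ℝ × ℝ), IsLine l ∧
      ∀ a : Fin 3, ∃ x ∈ segment ℝ (s (a, 0)) (s (a, 1)), x ∈ l) :
    ¬ ∀ u v w u' v' w' : Fin 2,
        orient (s (0, u)) (s (1, v)) (s (2, w)) =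
          orient (s (0, u')) (s (1, v')) (s (2, w')) :=
  segments_stabbed_orientations_not_all_equal_general s hgen hline
end
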